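/- Fix an integer n ≥ 1, ε ∈ ℝ, N ∈ (−∞, 0) ∪ (n, ∞), an open interval I ⊆ ℝ, a smooth function ψ : I → ℝ, and smooth maps B, R : I → (n×n real matrices) satisfying B' + B² + R = 0 on I. Set B_ε := e^{(2(1−ε)/n)ψ}·B − (ψ*/n)·Iₙ, θ_ε := tr(B_ε), σ_ε := B_ε − (θ_ε/n)·Iₙ, Ric_N := tr(R) + ψ'' − ψ'²/(N−n), and c := (1/n)(1 − ε²(N−n)/N). Then the weighted Raychaudhuri inequality θ_ε* ≤ −e^{(4(1−ε)/n)ψ}·Ric_N − tr(σ_ε²) − c·θ_ε² holds on I. Moreover, for ε = 0 the same inequality also holds with N = 0 and c = 1/n (where Ric₀ := tr(R) + ψ'' + ψ'²/n). -/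

import Mathlib

attribute [local instance] Matrix.normedAddCommGroup Matrix.normedSpace

/-- Derivative with respect to the `ε`-proper time, scalar version:
`f* = e^{(2(1−ε)/n)ψ} · f'`. -/
noncomputable def sstar (n : ℕ) (ε : ℝ) (ψ : ℝ → ℝ) (f : ℝ → ℝ) : ℝ → ℝ :=
  fun t => Real.exp (2 * (1 - ε) / (n : ℝ) * ψ t) * deriv f t

/-- timelike weighted Raychaudhuri inequality, Proposition 5.8.
For `N ∈ (−∞,0) ∪ (n,∞)`, with `B' + B² + R = 0` on the open interval `I`,
`B_ε = e^{(2(1−ε)/n)ψ}·B − (ψ*/n)·Iₙ`, `θ_ε = tr B_ε`, `σ_ε = B_ε − (θ_ε/n)·Iₙ`,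
`Ric_N = tr R + ψ'' − ψ'²/(N−n)` and `c = (1/n)(1 − ε²(N−n)/N)`, one has
`θ_ε* ≤ −e^{(4(1−ε)/n)ψ}·Ric_N − tr(σ_ε²) − c·θ_ε²` on `I`; moreover for `ε = 0`
the same inequality also holds with `N = 0` and `c = 1/n`, where
`Ric₀ = tr R + ψ'' + ψ'²/n`. -/
theorem weighted_raychaudhuri_inequality (n : ℕ) (hn : 1 ≤ n) (ε N : ℝ)
    (hN : N < 0 ∨ (n : ℝ) < N)
    (I : Set ℝ) (hIopen : IsOpen I) (hIinterval : I.OrdConnected)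
    (ψ : ℝ → ℝ) (B R : ℝ → Matrix (Fin n) (Fin n) ℝ)
    (hψ : ContDiffOn ℝ (⊤ : ℕ∞) ψ I) (hB : ContDiffOn ℝ (⊤ : ℕ∞) B I) (hR : ContDiffOn ℝ (⊤ : ℕ∞) R I)
    (hRiccati : ∀ t ∈ I, deriv B t + B t * B t + R t = 0)
    (Bε : ℝ → Matrix (Fin n) (Fin n) ℝ)
    (hBε : ∀ t, Bε t = Real.exp (2 * (1 - ε) / (n : ℝ) * ψ t) • B t
      - (sstar n ε ψ ψ t / (n : ℝ)) • (1 : Matrix (Fin n) (Fin n) ℝ))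
    (θε : ℝ → ℝ) (hθε : ∀ t, θε t = (Bε t).trace)
    (σε : ℝ → Matrix (Fin n) (Fin n) ℝ)
    (hσε : ∀ t, σε t = Bε t - (θε t / (n : ℝ)) • (1 : Matrix (Fin n) (Fin n) ℝ))
    (RicN : ℝ → ℝ)
    (hRicN : ∀ t, RicN t = (R t).trace + deriv (deriv ψ) t
      - (deriv ψ t) ^ 2 / (N - n))
    (Ric₀ : ℝ → ℝ)
    (hRic₀ : ∀ t, Ric₀ t = (R t).trace + deriv (deriv ψ) t + (deriv ψ t) ^ 2 / (n : ℝ))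
    (c : ℝ) (hc : c = (1 / (n : ℝ)) * (1 - ε ^ 2 * (N - n) / N)) :
    (∀ t ∈ I,
      sstar n ε ψ θε t ≤
        -(Real.exp (4 * (1 - ε) / (n : ℝ) * ψ t) * RicN t)
          - (σε t * σε t).trace - c * θε t ^ 2) ∧
    (ε = 0 → ∀ t ∈ I,
      sstar n ε ψ θε t ≤
        -(Real.exp (4 * (1 - ε) / (n : ℝ) * ψ t) * Ric₀ t)
          - (σε t * σε t).trace - (1 / (n : ℝ)) * θε t ^ 2) := by
  have hn0 : (n : ℝ) ≠ 0 := by positivity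
  set k : ℝ := 2 * (1 - ε) / (n : ℝ) with hk
  -- explicit form of θε
  have hθ : ∀ t, θε t = Real.exp (k * ψ t) * ((B t).trace - deriv ψ t) := by
    intro t
    rw [hθε t, hBε t]
    simp only [Matrix.trace_sub, Matrix.trace_smul, Matrix.trace_one, smul_eq_mul,
      Fintype.card_fin, sstar, ← hk]
    field_simp
  -- explicit form of σε
  have hσ : ∀ t, σε t = Real.exp (k * ψ t) • B t
      - (Real.exp (k * ψ t) * (B t).trace / n) • (1 : Matrix (Fin n) (Fin n) ℝ) := by
    intro t
    rw [hσε t, hBε t, hθ t]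
    have : sstar n ε ψ ψ t = Real.exp (k * ψ t) * deriv ψ t := by rw [sstar, ← hk]
    rw [this, sub_sub, ← add_smul]
    congr 1
    ring
  -- trace of σε²
  have hσσ : ∀ t, (σε t * σε t).trace
      = Real.exp (k * ψ t) ^ 2 * ((B t * B t).trace - (B t).trace ^ 2 / n) := by
    intro t
    rw [hσ t]
    simp only [sub_mul, mul_sub, Matrix.smul_mul, Matrix.mul_smul, Matrix.one_mul,
      Matrix.mul_one, smul_smul, Matrix.trace_sub, Matrix.trace_smul, Matrix.trace_one,
      smul_eq_mul, Fintype.card_fin]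
    field_simp
    ring
  -- value of θε*
  have hMain : ∀ t ∈ I, sstar n ε ψ θε t =
      Real.exp (k * ψ t) * (Real.exp (k * ψ t) *
        (k * deriv ψ t * ((B t).trace - deriv ψ t)
          - ((B t * B t).trace + (R t).trace + deriv (deriv ψ) t))) := by
    intro t ht
    have htn : I ∈ nhds t := hIopen.mem_nhds ht
    have hψ1 : HasDerivAt ψ (deriv ψ t) t :=
      ((hψ.contDiffAt htn).differentiableAt (by simp)).hasDerivAt
    have hψ2 : HasDerivAt (deriv ψ) (deriv (deriv ψ) t) t :=
      ((((hψ.deriv_of_isOpen (m := 1) hIopen (by exact WithTop.coe_le_coe.mpr le_top)).contDiffAt htn).differentiableAt (by simp))).hasDerivAt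
    have hBd : HasDerivAt B (deriv B t) t :=
      ((hB.contDiffAt htn).differentiableAt (by simp)).hasDerivAt
    have hTd : HasDerivAt (fun s => (B s).trace) ((deriv B t).trace) t := by
      have := ((Matrix.traceLinearMap (Fin n) ℝ ℝ).toContinuousLinearMap.hasFDerivAt
        (x := B t)).comp_hasDerivAt t hBd
      exact this
    have hEd : HasDerivAt (fun s => Real.exp (k * ψ s))
        (Real.exp (k * ψ t) * (k * deriv ψ t)) t := (hψ1.const_mul k).exp
    have hg : HasDerivAt (fun s => Real.exp (k * ψ s) * ((B s).trace - deriv ψ s))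
        (Real.exp (k * ψ t) * (k * deriv ψ t) * ((B t).trace - deriv ψ t)
          + Real.exp (k * ψ t) * ((deriv B t).trace - deriv (deriv ψ) t)) t :=
      hEd.mul (hTd.sub hψ2)
    have hfun : θε = fun s => Real.exp (k * ψ s) * ((B s).trace - deriv ψ s) := funext hθ
    have hBR : deriv B t = -(B t * B t) - R t := by
      have h := hRiccati t ht
      rw [add_assoc, add_eq_zero_iff_eq_neg] at h
      rw [h]; abel
    have hdθ : deriv θε t = Real.exp (k * ψ t) * (k * deriv ψ t) * ((B t).trace - deriv ψ t)
          + Real.exp (k * ψ t) * ((deriv B t).trace - deriv (deriv ψ) t) := by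
      rw [hfun]; exact hg.deriv
    rw [sstar, ← hk, hdθ, hBR]
    simp only [Matrix.trace_sub, Matrix.trace_neg]
    ring
  -- rewrite e^{4(1-ε)ψ/n} = E²
  have hE2 : ∀ t, Real.exp (4 * (1 - ε) / (n : ℝ) * ψ t) = Real.exp (k * ψ t) ^ 2 := by
    intro t
    rw [sq, ← Real.exp_add]
    congr 1
    rw [hk]; ring
  constructor
  · intro t ht
    have hNn0 : N - (n : ℝ) ≠ 0 := by
      rcases hN with h | h
      · have : (0:ℝ) < n := by positivity
        nlinarith
      · nlinarith
    have hN0 : N ≠ 0 := by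
      rcases hN with h | h
      · linarith
      · have : (0:ℝ) < n := by positivity
        nlinarith
    have hpos : 0 < (n : ℝ) * (N * (N - n)) := by
      rcases hN with h | h
      · have hn' : (0:ℝ) < n := by positivity
        have : 0 < N * (N - n) := mul_pos_of_neg_of_neg h (by nlinarith)
        positivity
      · have hn' : (0:ℝ) < n := by positivity
        have : 0 < N * (N - n) := mul_pos (by linarith) (by linarith)
        positivity
    rw [hMain t ht, hE2 t, hRicN t, hσσ t, hθ t, hc]
    set E := Real.exp (k * ψ t) with hE
    set p := deriv ψ t
    set T := (B t).trace
    set q := (B t * B t).trace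
    set r := (R t).trace
    set s := deriv (deriv ψ) t
    have key : (-(E ^ 2 * (r + s - p ^ 2 / (N - n))) - E ^ 2 * (q - T ^ 2 / n)
          - (1 / (n : ℝ)) * (1 - ε ^ 2 * (N - n) / N) * (E * (T - p)) ^ 2)
        - E * (E * (k * p * (T - p) - (q + r + s)))
        = E ^ 2 * (ε * (N - n) * (T - p) + N * p) ^ 2 / ((n : ℝ) * (N * (N - n))) := by
      rw [hk]
      field_simp
      ring
    have hnonneg : 0 ≤ E ^ 2 * (ε * (N - n) * (T - p) + N * p) ^ 2 / ((n : ℝ) * (N * (N - n))) :=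
      div_nonneg (mul_nonneg (sq_nonneg _) (sq_nonneg _)) hpos.le
    linarith [key, hnonneg]
  · intro hε t ht
    subst hε
    rw [hMain t ht, hE2 t, hRic₀ t, hσσ t, hθ t]
    set E := Real.exp (k * ψ t)
    set p := deriv ψ t
    set T := (B t).trace
    set q := (B t * B t).trace
    set r := (R t).trace
    set s := deriv (deriv ψ) t
    have : E * (E * (k * p * (T - p) - (q + r + s)))
        = -(E ^ 2 * (r + s + p ^ 2 / n)) - E ^ 2 * (q - T ^ 2 / n)
          - (1 / (n : ℝ)) * (E * (T - p)) ^ 2 := by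
      rw [hk]
      field_simp
      ring
    linarith [this.le]
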